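/- Correctness of pruning for AND-patterns: let G₁,…,Gₙ be RDF graphs with union G, let S ⊆ {1,…,n} with G' = ⋃_{i∈S} Gᵢ, and let P = tp₁ AND tp₂ be a conjunction of two triple patterns such that for every i ∉ S and every j ∈ {1,2}, ⟦tpⱼ⟧_{Gᵢ} = ∅. Then the evaluation of P over G equals the evaluation of P over G', where ⟦tp₁ AND tp₂⟧_H is the set of all unions μ₁ ∪ μ₂ of compatible solution mappings μ₁ ∈ ⟦tp₁⟧_H and μ₂ ∈ ⟦tp₂⟧_H (compatible meaning they agree on shared variables). -/

import Mathlib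

/-- RDF terms: IRIs, blank nodes, and literals (lexical form, datatype IRI). -/
inductive Node where
  | iri (u : String)
  | bnode (b : String)
  | lit (lex dt : String)
deriving DecidableEq

def Node.isIRI : Node → Prop | .iri _ => True | _ => False
def Node.isBNode : Node → Prop | .bnode _ => True | _ => False
def Node.isLit : Node → Prop | .lit _ _ => True | _ => False

/-- A component of a triple pattern: a variable or a concrete RDF term. -/
inductive Pat where
  | var (v : ℕ)
  | node (n : Node)
deriving DecidableEq

abbrev RDFGraph := Set (Node × Node × Node)
abbrev TP := Pat × Pat × Pat
/-- Solution mappings: partial functions from variables to RDF terms. -/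
abbrev SolMap := ℕ → Option Node

def Pat.vars : Pat → Set ℕ
  | .var v => {v}
  | .node _ => ∅

def TP.vars (tp : TP) : Set ℕ := Pat.vars tp.1 ∪ Pat.vars tp.2.1 ∪ Pat.vars tp.2.2

def Pat.subst (μ : SolMap) : Pat → Option Node
  | .var v => μ v
  | .node n => some n

/-- Evaluation ⟦tp⟧_G: solution mappings with domain vars(tp) whose instantiation is in G. -/
def evalTP (tp : TP) (G : RDFGraph) : Set SolMap :=
  { μ | (∀ v, (μ v).isSome ↔ v ∈ TP.vars tp) ∧
        ∃ x y z, Pat.subst μ tp.1 = some x ∧ Pat.subst μ tp.2.1 = some y ∧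
          Pat.subst μ tp.2.2 = some z ∧ (x, y, z) ∈ G }

/-- Two solution mappings are compatible if they agree where both are defined. -/
def compatible (μ₁ μ₂ : SolMap) : Prop :=
  ∀ v x y, μ₁ v = some x → μ₂ v = some y → x = y

/-- The union (merge) of two solution mappings. -/
def mergeMap (μ₁ μ₂ : SolMap) : SolMap := fun v => (μ₁ v).or (μ₂ v)

/-- Join of two sets of solution mappings. -/
def joinSol (Ω₁ Ω₂ : Set SolMap) : Set SolMap :=
  { μ | ∃ μ₁ ∈ Ω₁, ∃ μ₂ ∈ Ω₂, compatible μ₁ μ₂ ∧ μ = mergeMap μ₁ μ₂ }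

lemma evalTP_prune (n : ℕ) (G : Fin n → RDFGraph) (S : Set (Fin n)) (tp : TP)
    (h : ∀ i ∉ S, evalTP tp (G i) = ∅) :
    evalTP tp (⋃ i, G i) = evalTP tp (⋃ i ∈ S, G i) := by
  ext μ
  constructor
  · rintro ⟨hdom, x, y, z, hx, hy, hz, hmem⟩
    obtain ⟨_, ⟨i, rfl⟩, hi⟩ := hmem
    by_cases hs : i ∈ S
    · exact ⟨hdom, x, y, z, hx, hy, hz, Set.mem_biUnion hs hi⟩
    · exact absurd (show μ ∈ evalTP tp (G i) from ⟨hdom, x, y, z, hx, hy, hz, hi⟩)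
        (by simp [h i hs])
  · rintro ⟨hdom, x, y, z, hx, hy, hz, hmem⟩
    obtain ⟨i, _, hi⟩ := Set.mem_iUnion₂.mp hmem
    exact ⟨hdom, x, y, z, hx, hy, hz, Set.mem_iUnion.mpr ⟨i, hi⟩⟩

theorem stmt_13 (n : ℕ) (G : Fin n → RDFGraph) (S : Set (Fin n)) (tp₁ tp₂ : TP)
    (h : ∀ i ∉ S, evalTP tp₁ (G i) = ∅ ∧ evalTP tp₂ (G i) = ∅) :
    joinSol (evalTP tp₁ (⋃ i, G i)) (evalTP tp₂ (⋃ i, G i)) =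
      joinSol (evalTP tp₁ (⋃ i ∈ S, G i)) (evalTP tp₂ (⋃ i ∈ S, G i)) := by
  rw [evalTP_prune n G S tp₁ (fun i hi => (h i hi).1),
      evalTP_prune n G S tp₂ (fun i hi => (h i hi).2)]
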